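/- Let k ∈ ℕ⁺ and γ ∈ (0,1). Consider two chunk-level policies π1^k, π2^k (Markov kernels from states to action chunks ã = a_{0:k−1}) evaluated in chunk-level world models T1^k(s'|s, ã) and T2^k(s'|s, ã), respectively, starting from the same initial state distribution, with per-step rewards in [0, r_max] (so chunk rewards are bounded by r_max(1 − γ^k)/(1 − γ)) and shared chunk reward function. Define ε_π^k = sup_s D_TV(π1^k(·|s), π2^k(·|s)) and ε_m^k = sup_t E_{s∼d_t^{π1^k}}[ D_TV(T1^k(·|s, ã), T2^k(·|s, ã)) ], where d_t^{π1^k} is the state distribution at macro-step t of the first process. Then |V(π1^k) − V(π2^k)| ≤ (2 r_max/(1 − γ)) · [ (γ^k/(1 − γ^k)) ε_π^k + ε_π^k + (γ^k/(1 − γ^k)) ε_m^k ]. -/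

import Mathlib

open MeasureTheory ProbabilityTheory

/-- Total variation distance between two measures:
`D_TV(μ, ν) = sup_{A measurable} |μ(A) − ν(A)|`. -/
noncomputable def tvDist {S : Type*} [MeasurableSpace S] (μ ν : Measure S) : ℝ :=
  ⨆ A : {A : Set S // MeasurableSet A}, |(μ A.1).toReal - (ν A.1).toReal|

/-- The joint state–action distribution obtained from a state distribution `μ`
and a (chunk-level) policy `π`. -/
noncomputable def saDist {S Act : Type*} [MeasurableSpace S] [MeasurableSpace Act]
    (μ : Measure S) (π : S → Measure Act) : Measure (S × Act) :=
  μ.bind (fun s => (π s).map (fun a => (s, a)))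

/-- The state distribution at macro-step `t` of a (possibly time-inhomogeneous) process
with initial state distribution `μ0`, policies `π t` and transition kernels `T t`. -/
noncomputable def stateDist {S Act : Type*} [MeasurableSpace S] [MeasurableSpace Act]
    (μ0 : Measure S) (π : ℕ → S → Measure Act) (T : ℕ → S × Act → Measure S) :
    ℕ → Measure S
  | 0 => μ0
  | t + 1 => (saDist (stateDist μ0 π T t) (π t)).bind (T t)

/-- The discounted occupancy measure `d = (1 − β) Σ_{t≥0} β^t d_t`. -/
noncomputable def occ {X : Type*} [MeasurableSpace X] (β : ℝ) (d : ℕ → Measure X) :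
    Measure X :=
  Measure.sum fun t => ENNReal.ofReal ((1 - β) * β ^ t) • d t

/-- The state–action distribution at macro-step `t` of the process
`(μ0, π, T)`. -/
noncomputable def saDistAt {S Act : Type*} [MeasurableSpace S] [MeasurableSpace Act]
    (μ0 : Measure S) (π : ℕ → S → Measure Act) (T : ℕ → S × Act → Measure S)
    (t : ℕ) : Measure (S × Act) :=
  saDist (stateDist μ0 π T t) (π t)

/-- The expected discounted return `V = (1/(1 − β)) ∫ r̃ d d^π`, where `d^π` is the
discounted state–action occupancy measure of the process `(μ0, π, T)` and `β` the
macro-step discount factor. -/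
noncomputable def value {S Act : Type*} [MeasurableSpace S] [MeasurableSpace Act]
    (β : ℝ) (rew : S × Act → ℝ)
    (μ0 : Measure S) (π : ℕ → S → Measure Act) (T : ℕ → S × Act → Measure S) : ℝ :=
  (1 - β)⁻¹ * ∫ p, rew p ∂(occ β (saDistAt μ0 π T))


/-!
This is the simulation lemma for total variation. Attaching a kernel to a measure (`⊗ₘ`) or
pushing a measure through a kernel (`∘ₘ`) does not increase the total variation distance, and
replacing the kernel by another one costs at most their distance averaged over the measure.
Hence at macro-step `t` the two state–action distributions are within `επ + t (επ + εm)` of each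
other, and the expected chunk rewards, bounded by `R = r_max (1 - γ^k) / (1 - γ)`, differ by at
most `R (επ + t (επ + εm))`. Summing against the weights `(γ^k)^t` gives
`R / (1 - γ^k) · (επ + (επ + εm) γ^k / (1 - γ^k))`, which is half of the stated bound.
-/

section TotalVariation

variable {X : Type*} [MeasurableSpace X]

lemma integral_mem_Icc_of_forall_mem_Icc (μ : Measure X) [IsProbabilityMeasure μ] {f : X → ℝ}
    (hf : AEMeasurable f μ) {a b : ℝ} (hfab : ∀ x, f x ∈ Set.Icc a b) :
    ∫ x, f x ∂μ ∈ Set.Icc a b := by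
  have hint := Integrable.of_mem_Icc a b hf (ae_of_all _ hfab)
  constructor
  · simpa using integral_mono (integrable_const a) hint fun x => (hfab x).1
  · simpa using integral_mono hint (integrable_const b) fun x => (hfab x).2

lemma tvDist_nonneg (μ ν : Measure X) : 0 ≤ tvDist μ ν :=
  Real.iSup_nonneg fun _ => abs_nonneg _

lemma abs_measureReal_sub_le_one (μ ν : Measure X) [IsProbabilityMeasure μ]
    [IsProbabilityMeasure ν] (A : Set X) : |μ.real A - ν.real A| ≤ 1 := by
  rw [abs_sub_le_iff]
  constructor <;> linarith [measureReal_nonneg (μ := μ) (s := A),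
    measureReal_nonneg (μ := ν) (s := A), measureReal_le_one (μ := μ) (s := A),
    measureReal_le_one (μ := ν) (s := A)]

lemma tvDist_le_one (μ ν : Measure X) [IsProbabilityMeasure μ] [IsProbabilityMeasure ν] :
    tvDist μ ν ≤ 1 :=
  Real.iSup_le (fun A => abs_measureReal_sub_le_one μ ν A.1) zero_le_one

lemma abs_measureReal_sub_le_tvDist (μ ν : Measure X) [IsProbabilityMeasure μ]
    [IsProbabilityMeasure ν] {A : Set X} (hA : MeasurableSet A) :
    |μ.real A - ν.real A| ≤ tvDist μ ν :=
  le_ciSup (f := fun A : {A : Set X // MeasurableSet A} => |μ.real A.1 - ν.real A.1|)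
    ⟨1, by rintro _ ⟨B, rfl⟩; exact abs_measureReal_sub_le_one μ ν B.1⟩ ⟨A, hA⟩

lemma tvDist_le_of_forall_measurableSet {μ ν : Measure X} {c : ℝ}
    (h : ∀ A, MeasurableSet A → |μ.real A - ν.real A| ≤ c) : tvDist μ ν ≤ c :=
  ciSup_le fun A => h A.1 A.2

lemma tvDist_self (μ : Measure X) : tvDist μ μ = 0 := by
  simp [tvDist]

/-- By the layer-cake formula, a `[0, C]`-valued function integrates over `(0, C]` the
measures of its superlevel sets, each of which moves by at most `tvDist μ ν`. -/
lemma abs_integral_sub_le_mul_tvDist (μ ν : Measure X) [IsProbabilityMeasure μ]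
    [IsProbabilityMeasure ν] {f : X → ℝ} (hf : Measurable f) {C : ℝ}
    (hfC : ∀ x, f x ∈ Set.Icc 0 C) :
    |∫ x, f x ∂μ - ∫ x, f x ∂ν| ≤ C * tvDist μ ν := by
  have layer (ρ : Measure X) [IsProbabilityMeasure ρ] :
      ∫ x, f x ∂ρ = ∫ t in Set.Ioc 0 C, ρ.real {x | t ≤ f x} :=
    (Integrable.of_mem_Icc 0 C hf.aemeasurable (ae_of_all _ hfC)).integral_eq_integral_Ioc_meas_le
      (ae_of_all _ fun x => (hfC x).1) (ae_of_all _ fun x => (hfC x).2)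
  have integrableOn (ρ : Measure X) [IsProbabilityMeasure ρ] :
      IntegrableOn (fun t => ρ.real {x | t ≤ f x}) (Set.Ioc 0 C) := by
    have hanti : Antitone fun t => ρ.real {x | t ≤ f x} := fun s t hst =>
      measureReal_mono fun x hx => le_trans hst hx
    exact Integrable.of_mem_Icc 0 1 hanti.measurable.aemeasurable
      (ae_of_all _ fun t => ⟨measureReal_nonneg, measureReal_le_one⟩)
  rw [layer μ, layer ν, ← integral_sub (integrableOn μ) (integrableOn ν), ← Real.norm_eq_abs]
  obtain ⟨x₀⟩ := nonempty_of_isProbabilityMeasure μ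
  have hC : 0 ≤ C := (hfC x₀).1.trans (hfC x₀).2
  calc _ ≤ tvDist μ ν * volume.real (Set.Ioc 0 C) :=
        norm_setIntegral_le_of_norm_le_const measure_Ioc_lt_top fun t _ =>
          abs_measureReal_sub_le_tvDist μ ν (hf measurableSet_Ici)
    _ = C * tvDist μ ν := by simp [hC, mul_comm]

end TotalVariation

section Kernels

variable {X Y : Type*} [MeasurableSpace X] [MeasurableSpace Y]

lemma saDist_eq_compProd (μ : Measure X) [SFinite μ] (κ : Kernel X Y) [IsSFiniteKernel κ] :
    saDist μ κ = μ ⊗ₘ κ := by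
  rw [Measure.compProd_eq_comp_prod, saDist]
  congr with x : 1
  rw [Kernel.prod_apply, Kernel.id_apply, Measure.dirac_prod]

lemma MeasureTheory.Measure.integral_comp {E : Type*} [NormedAddCommGroup E] [NormedSpace ℝ E]
    (μ : Measure X) [SFinite μ] (κ : Kernel X Y) [IsSFiniteKernel κ] {f : Y → E}
    (hf : Integrable f (κ ∘ₘ μ)) : ∫ y, f y ∂(κ ∘ₘ μ) = ∫ x, ∫ y, f y ∂κ x ∂μ := by
  rw [← Measure.snd_compProd] at hf ⊢
  rw [Measure.snd, integral_map measurable_snd.aemeasurable hf.1,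
    Measure.integral_compProd (f := fun p => f p.2) (hf.comp_measurable measurable_snd)]

lemma abs_integral_integral_sub_le (μ : Measure X) [IsProbabilityMeasure μ]
    (κ₁ κ₂ : Kernel X Y) [IsMarkovKernel κ₁] [IsMarkovKernel κ₂] {f : X × Y → ℝ}
    (hf : Measurable f) {C : ℝ} (hfC : ∀ p, f p ∈ Set.Icc 0 C) {δ : X → ℝ}
    (hδ : Integrable δ μ) (hκδ : ∀ x, tvDist (κ₁ x) (κ₂ x) ≤ δ x) :
    |∫ x, ∫ y, f (x, y) ∂κ₁ x ∂μ - ∫ x, ∫ y, f (x, y) ∂κ₂ x ∂μ| ≤ C * ∫ x, δ x ∂μ := by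
  obtain ⟨p₀⟩ := nonempty_of_isProbabilityMeasure (μ ⊗ₘ κ₁)
  have hC : 0 ≤ C := (hfC p₀).1.trans (hfC p₀).2
  have integrable (κ : Kernel X Y) [IsMarkovKernel κ] :
      Integrable (fun x => ∫ y, f (x, y) ∂κ x) μ :=
    Integrable.of_mem_Icc 0 C
      hf.stronglyMeasurable.integral_kernel_prod_right'.measurable.aemeasurable
      (ae_of_all _ fun x => integral_mem_Icc_of_forall_mem_Icc (κ x)
        (hf.comp measurable_prodMk_left).aemeasurable fun y => hfC (x, y))
  have pointwise (x : X) :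
      |∫ y, f (x, y) ∂κ₁ x - ∫ y, f (x, y) ∂κ₂ x| ≤ C * δ x :=
    (abs_integral_sub_le_mul_tvDist (κ₁ x) (κ₂ x) (hf.comp measurable_prodMk_left)
      fun y => hfC (x, y)).trans (mul_le_mul_of_nonneg_left (hκδ x) hC)
  rw [← integral_sub (integrable κ₁) (integrable κ₂), ← integral_const_mul]
  exact (abs_integral_le_integral_abs).trans
    (integral_mono_of_nonneg (ae_of_all _ fun _ => abs_nonneg _) (hδ.const_mul C)
      (ae_of_all _ pointwise))

lemma tvDist_compProd_le (μ₁ μ₂ : Measure X) [IsProbabilityMeasure μ₁] [IsProbabilityMeasure μ₂]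
    (κ₁ κ₂ : Kernel X Y) [IsMarkovKernel κ₁] [IsMarkovKernel κ₂] {ε : ℝ}
    (hκ : ∀ x, tvDist (κ₁ x) (κ₂ x) ≤ ε) :
    tvDist (μ₁ ⊗ₘ κ₁) (μ₂ ⊗ₘ κ₂) ≤ tvDist μ₁ μ₂ + ε := by
  refine tvDist_le_of_forall_measurableSet fun A hA => ?_
  set f : X × Y → ℝ := A.indicator 1 with f_def
  have hf : Measurable f := measurable_one.indicator hA
  have hf01 : ∀ p, f p ∈ Set.Icc 0 1 := fun p => by
    by_cases hp : p ∈ A <;> simp [f, hp]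
  have measureReal_eq (μ : Measure X) [IsProbabilityMeasure μ] (κ : Kernel X Y)
      [IsMarkovKernel κ] :
      (μ ⊗ₘ κ).real A = ∫ x, ∫ y, f (x, y) ∂κ x ∂μ := by
    rw [← Measure.integral_compProd (Integrable.of_mem_Icc 0 1 hf.aemeasurable
      (ae_of_all _ hf01)), f_def, integral_indicator_one hA]
  rw [measureReal_eq, measureReal_eq]
  calc _ ≤ |∫ x, ∫ y, f (x, y) ∂κ₁ x ∂μ₁ - ∫ x, ∫ y, f (x, y) ∂κ₂ x ∂μ₁|
        + |∫ x, ∫ y, f (x, y) ∂κ₂ x ∂μ₁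
          - ∫ x, ∫ y, f (x, y) ∂κ₂ x ∂μ₂| := abs_sub_le _ _ _
    _ ≤ 1 * ∫ _, ε ∂μ₁ + 1 * tvDist μ₁ μ₂ :=
        add_le_add (abs_integral_integral_sub_le μ₁ κ₁ κ₂ hf hf01 (integrable_const ε) hκ)
          (abs_integral_sub_le_mul_tvDist μ₁ μ₂
            hf.stronglyMeasurable.integral_kernel_prod_right'.measurable fun x =>
              integral_mem_Icc_of_forall_mem_Icc (κ₂ x)
                (hf.comp measurable_prodMk_left).aemeasurable fun y => hf01 (x, y))
    _ = tvDist μ₁ μ₂ + ε := by simp [add_comm]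

lemma tvDist_comp_le (ρ₁ ρ₂ : Measure X) [IsProbabilityMeasure ρ₁] [IsProbabilityMeasure ρ₂]
    (τ₁ τ₂ : Kernel X Y) [IsMarkovKernel τ₁] [IsMarkovKernel τ₂] {δ : X → ℝ}
    (hδ : Integrable δ ρ₁) (hτδ : ∀ x, tvDist (τ₁ x) (τ₂ x) ≤ δ x) :
    tvDist (τ₁ ∘ₘ ρ₁) (τ₂ ∘ₘ ρ₂) ≤ tvDist ρ₁ ρ₂ + ∫ x, δ x ∂ρ₁ := by
  refine tvDist_le_of_forall_measurableSet fun A hA => ?_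
  set f : Y → ℝ := A.indicator 1 with f_def
  have hf : Measurable f := measurable_one.indicator hA
  have hf01 : ∀ y, f y ∈ Set.Icc 0 1 := fun y => by
    by_cases hy : y ∈ A <;> simp [f, hy]
  have measureReal_eq (ρ : Measure X) [IsProbabilityMeasure ρ] (τ : Kernel X Y)
      [IsMarkovKernel τ] :
      (τ ∘ₘ ρ).real A = ∫ x, ∫ y, f y ∂τ x ∂ρ := by
    rw [← Measure.integral_comp ρ τ (Integrable.of_mem_Icc 0 1 hf.aemeasurable
      (ae_of_all _ hf01)), f_def, integral_indicator_one hA]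
  rw [measureReal_eq, measureReal_eq]
  calc _ ≤ |∫ x, ∫ y, f y ∂τ₁ x ∂ρ₁ - ∫ x, ∫ y, f y ∂τ₂ x ∂ρ₁|
        + |∫ x, ∫ y, f y ∂τ₂ x ∂ρ₁
          - ∫ x, ∫ y, f y ∂τ₂ x ∂ρ₂| := abs_sub_le _ _ _
    _ ≤ 1 * ∫ x, δ x ∂ρ₁ + 1 * tvDist ρ₁ ρ₂ :=
        add_le_add
          (abs_integral_integral_sub_le ρ₁ τ₁ τ₂ (hf.comp measurable_snd) (fun p => hf01 p.2)
            hδ hτδ)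
          (abs_integral_sub_le_mul_tvDist ρ₁ ρ₂
            hf.stronglyMeasurable.integral_kernel.measurable fun x =>
              integral_mem_Icc_of_forall_mem_Icc (τ₂ x) hf.aemeasurable hf01)
    _ = tvDist ρ₁ ρ₂ + ∫ x, δ x ∂ρ₁ := by simp [add_comm]

end Kernels

section Rollout

variable {S Act : Type*} [MeasurableSpace S] [MeasurableSpace Act] (μ₀ : Measure S)

lemma stateDist_succ (π : ℕ → S → Measure Act) (T : ℕ → S × Act → Measure S) (t : ℕ) :
    stateDist μ₀ π T (t + 1) = T t ∘ₘ saDistAt μ₀ π T t :=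
  rfl

variable [IsProbabilityMeasure μ₀]
  (κ : Kernel S Act) [IsMarkovKernel κ] (τ : Kernel (S × Act) S) [IsMarkovKernel τ]

instance isProbabilityMeasure_stateDist (t : ℕ) :
    IsProbabilityMeasure (stateDist μ₀ (fun _ => κ) (fun _ => τ) t) := by
  induction t with
  | zero => exact ‹IsProbabilityMeasure μ₀›
  | succ t ih =>
    rw [stateDist, saDist_eq_compProd]
    infer_instance

lemma saDistAt_eq_compProd (t : ℕ) :
    saDistAt μ₀ (fun _ => κ) (fun _ => τ) t = stateDist μ₀ (fun _ => κ) (fun _ => τ) t ⊗ₘ κ :=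
  saDist_eq_compProd _ κ

instance isProbabilityMeasure_saDistAt (t : ℕ) :
    IsProbabilityMeasure (saDistAt μ₀ (fun _ => κ) (fun _ => τ) t) := by
  rw [saDistAt_eq_compProd]
  infer_instance

variable {κ₁ κ₂ : Kernel S Act} [IsMarkovKernel κ₁] [IsMarkovKernel κ₂]
  {τ₁ τ₂ : Kernel (S × Act) S} [IsMarkovKernel τ₁] [IsMarkovKernel τ₂] {επ εm : ℝ}

theorem tvDist_stateDist_le (hεπ : ∀ s, tvDist (κ₁ s) (κ₂ s) ≤ επ)
    (hmeas : Measurable fun s => ⨆ a, tvDist (τ₁ (s, a)) (τ₂ (s, a)))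
    (hεm : ∀ t, ∫ s, (⨆ a, tvDist (τ₁ (s, a)) (τ₂ (s, a)))
      ∂(stateDist μ₀ (fun _ => κ₁) (fun _ => τ₁) t) ≤ εm) (t : ℕ) :
    tvDist (stateDist μ₀ (fun _ => κ₁) (fun _ => τ₁) t)
      (stateDist μ₀ (fun _ => κ₂) (fun _ => τ₂) t) ≤ (επ + εm) * t := by
  induction t with
  | zero => simp [stateDist, tvDist_self]
  | succ t ih =>
    set M : S → ℝ := fun s => ⨆ a, tvDist (τ₁ (s, a)) (τ₂ (s, a))
    have hM (s : S) : M s ∈ Set.Icc 0 1 :=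
      ⟨Real.iSup_nonneg fun _ => tvDist_nonneg _ _,
        Real.iSup_le (fun _ => tvDist_le_one _ _) zero_le_one⟩
    have le_M (p : S × Act) : tvDist (τ₁ p) (τ₂ p) ≤ M p.1 :=
      le_ciSup (f := fun a => tvDist (τ₁ (p.1, a)) (τ₂ (p.1, a)))
        ⟨1, Set.forall_mem_range.2 fun _ => tvDist_le_one _ _⟩ p.2
    set d₁ := stateDist μ₀ (fun _ => κ₁) (fun _ => τ₁) t
    set d₂ := stateDist μ₀ (fun _ => κ₂) (fun _ => τ₂) t
    have integral_M : ∫ p, M p.1 ∂(d₁ ⊗ₘ κ₁) = ∫ s, M s ∂d₁ := by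
      conv_rhs => rw [← Measure.fst_compProd d₁ κ₁]
      rw [Measure.fst, integral_map measurable_fst.aemeasurable hmeas.aestronglyMeasurable]
    have hMint : Integrable (fun p : S × Act => M p.1) (d₁ ⊗ₘ κ₁) :=
      Integrable.of_mem_Icc 0 1 (hmeas.comp measurable_fst).aemeasurable
        (ae_of_all _ fun p => hM p.1)
    rw [stateDist_succ, stateDist_succ, saDistAt_eq_compProd, saDistAt_eq_compProd]
    calc _ ≤ tvDist (d₁ ⊗ₘ κ₁) (d₂ ⊗ₘ κ₂) + ∫ p, M p.1 ∂(d₁ ⊗ₘ κ₁) :=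
          tvDist_comp_le _ _ τ₁ τ₂ hMint le_M
      _ ≤ ((επ + εm) * t + επ) + εm := by
          gcongr
          · exact (tvDist_compProd_le d₁ d₂ κ₁ κ₂ hεπ).trans (by gcongr)
          · exact integral_M.trans_le (hεm t)
      _ = (επ + εm) * (t + 1 : ℕ) := by push_cast; ring

theorem tvDist_saDistAt_le (hεπ : ∀ s, tvDist (κ₁ s) (κ₂ s) ≤ επ)
    (hmeas : Measurable fun s => ⨆ a, tvDist (τ₁ (s, a)) (τ₂ (s, a)))
    (hεm : ∀ t, ∫ s, (⨆ a, tvDist (τ₁ (s, a)) (τ₂ (s, a)))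
      ∂(stateDist μ₀ (fun _ => κ₁) (fun _ => τ₁) t) ≤ εm) (t : ℕ) :
    tvDist (saDistAt μ₀ (fun _ => κ₁) (fun _ => τ₁) t)
      (saDistAt μ₀ (fun _ => κ₂) (fun _ => τ₂) t) ≤ επ + (επ + εm) * t := by
  rw [saDistAt_eq_compProd, saDistAt_eq_compProd]
  linarith [tvDist_compProd_le (stateDist μ₀ (fun _ => κ₁) (fun _ => τ₁) t)
    (stateDist μ₀ (fun _ => κ₂) (fun _ => τ₂) t) κ₁ κ₂ hεπ,
    tvDist_stateDist_le μ₀ hεπ hmeas hεm t]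

end Rollout

section Discounting

variable {X : Type*} [MeasurableSpace X] {β : ℝ}

lemma isProbabilityMeasure_occ (hβ0 : 0 ≤ β) (hβ1 : β < 1) (d : ℕ → Measure X)
    [∀ t, IsProbabilityMeasure (d t)] : IsProbabilityMeasure (occ β d) := by
  constructor
  have hw (t : ℕ) : 0 ≤ (1 - β) * β ^ t := mul_nonneg (by linarith) (pow_nonneg hβ0 t)
  simp only [occ, Measure.sum_apply _ MeasurableSet.univ, Measure.smul_apply, measure_univ,
    smul_eq_mul, mul_one]
  rw [← ENNReal.ofReal_tsum_of_nonneg hw ((summable_geometric_of_lt_one hβ0 hβ1).mul_left _),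
    tsum_mul_left, tsum_geometric_of_lt_one hβ0 hβ1, mul_inv_cancel₀ (by linarith),
    ENNReal.ofReal_one]

lemma integral_occ (hβ0 : 0 ≤ β) (hβ1 : β < 1) (d : ℕ → Measure X)
    [∀ t, IsProbabilityMeasure (d t)] {f : X → ℝ} (hf : Measurable f) {C : ℝ}
    (hfC : ∀ x, f x ∈ Set.Icc 0 C) :
    ∫ x, f x ∂(occ β d) = ∑' t, (1 - β) * β ^ t * ∫ x, f x ∂(d t) := by
  have := isProbabilityMeasure_occ hβ0 hβ1 d
  have hint := Integrable.of_mem_Icc 0 C hf.aemeasurable (ae_of_all (occ β d) hfC)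
  rw [occ] at hint ⊢
  rw [integral_sum_measure hint]
  refine tsum_congr fun t => ?_
  rw [integral_smul_measure, ENNReal.toReal_ofReal (mul_nonneg (by linarith) (pow_nonneg hβ0 t)),
    smul_eq_mul]

lemma value_eq_tsum {S Act : Type*} [MeasurableSpace S] [MeasurableSpace Act]
    (hβ0 : 0 ≤ β) (hβ1 : β < 1) (rew : S × Act → ℝ) (μ₀ : Measure S)
    (π : ℕ → S → Measure Act) (T : ℕ → S × Act → Measure S)
    [∀ t, IsProbabilityMeasure (saDistAt μ₀ π T t)] (hrew : Measurable rew) {C : ℝ}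
    (hrewC : ∀ p, rew p ∈ Set.Icc 0 C) :
    value β rew μ₀ π T = ∑' t, β ^ t * ∫ p, rew p ∂(saDistAt μ₀ π T t) := by
  rw [value, integral_occ hβ0 hβ1 _ hrew hrewC, ← tsum_mul_left]
  congr with t
  field_simp [(by linarith : (1 - β) ≠ 0)]

lemma abs_tsum_pow_mul_sub_le (hβ0 : 0 ≤ β) (hβ1 : β < 1) {u v : ℕ → ℝ} {M A B : ℝ}
    (hu : ∀ t, |u t| ≤ M) (hv : ∀ t, |v t| ≤ M) (huv : ∀ t, |u t - v t| ≤ A + B * t) :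
    |∑' t, β ^ t * u t - ∑' t, β ^ t * v t| ≤ A / (1 - β) + B * β / (1 - β) ^ 2 := by
  have hβ : ‖β‖ < 1 := by rwa [Real.norm_of_nonneg hβ0]
  have summable (w : ℕ → ℝ) (hw : ∀ t, |w t| ≤ M) : Summable fun t => β ^ t * w t :=
    .of_norm_bounded ((summable_geometric_of_lt_one hβ0 hβ1).mul_right M) fun t => by
      rw [norm_mul, norm_pow, Real.norm_of_nonneg hβ0, Real.norm_eq_abs]
      exact mul_le_mul_of_nonneg_left (hw t) (pow_nonneg hβ0 t)
  have hasSum : HasSum (fun t : ℕ => β ^ t * (A + B * t)) (A / (1 - β) + B * β / (1 - β) ^ 2) := by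
    rw [div_eq_mul_inv A, mul_div_assoc]
    exact (((hasSum_geometric_of_lt_one hβ0 hβ1).mul_left A).add
      ((hasSum_coe_mul_geometric_of_norm_lt_one hβ).mul_left B)).congr_fun fun t => by ring
  rw [← (summable u hu).tsum_sub (summable v hv), ← Real.norm_eq_abs]
  refine tsum_of_norm_bounded hasSum fun t => ?_
  rw [← mul_sub, norm_mul, norm_pow, Real.norm_of_nonneg hβ0, Real.norm_eq_abs]
  exact mul_le_mul_of_nonneg_left (huv t) (pow_nonneg hβ0 t)

lemma abs_value_sub_le_of_tvDist_saDistAt_le {S Act : Type*} [MeasurableSpace S]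
    [MeasurableSpace Act] (hβ0 : 0 ≤ β) (hβ1 : β < 1) {rew : S × Act → ℝ}
    (hrew : Measurable rew) {C : ℝ} (hrewC : ∀ p, rew p ∈ Set.Icc 0 C)
    {μ₀ μ₀' : Measure S} {π π' : ℕ → S → Measure Act} {T T' : ℕ → S × Act → Measure S}
    [∀ t, IsProbabilityMeasure (saDistAt μ₀ π T t)]
    [∀ t, IsProbabilityMeasure (saDistAt μ₀' π' T' t)] {a b : ℝ}
    (htv : ∀ t : ℕ, tvDist (saDistAt μ₀ π T t) (saDistAt μ₀' π' T' t) ≤ a + b * t) :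
    |value β rew μ₀ π T - value β rew μ₀' π' T'|
      ≤ C / (1 - β) * (a + b * (β / (1 - β))) := by
  obtain ⟨p₀⟩ := nonempty_of_isProbabilityMeasure (saDistAt μ₀ π T 0)
  have hC : 0 ≤ C := (hrewC p₀).1.trans (hrewC p₀).2
  have reward_le (ρ : Measure (S × Act)) [IsProbabilityMeasure ρ] : |∫ p, rew p ∂ρ| ≤ C := by
    obtain ⟨h0, hC⟩ := integral_mem_Icc_of_forall_mem_Icc ρ hrew.aemeasurable hrewC
    exact abs_le.2 ⟨by linarith, hC⟩
  have reward_gap (t : ℕ) : |∫ p, rew p ∂(saDistAt μ₀ π T t) - ∫ p, rew p ∂(saDistAt μ₀' π' T' t)|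
      ≤ C * a + C * b * t :=
    calc _ ≤ C * (a + b * t) :=
          (abs_integral_sub_le_mul_tvDist _ _ hrew hrewC).trans
            (mul_le_mul_of_nonneg_left (htv t) hC)
      _ = C * a + C * b * t := by ring
  rw [value_eq_tsum hβ0 hβ1 rew μ₀ π T hrew hrewC, value_eq_tsum hβ0 hβ1 rew μ₀' π' T' hrew hrewC]
  calc _ ≤ C * a / (1 - β) + C * b * β / (1 - β) ^ 2 :=
        abs_tsum_pow_mul_sub_le hβ0 hβ1 (fun t => reward_le _) (fun t => reward_le _) reward_gap
    _ = C / (1 - β) * (a + b * (β / (1 - β))) := by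
        field_simp [(by linarith : 1 - β ≠ 0)]

end Discounting

/-- value divergence of a chunk-level policy in a chunk-level world model.
Two chunk-level policies `π₁^k, π₂^k` are evaluated in chunk-level world models
`T₁^k, T₂^k` from the same initial state distribution, with chunk rewards bounded by
`r_max (1 − γ^k)/(1 − γ)`. If `ε_π^k` bounds `sup_s D_TV(π₁^k(·|s), π₂^k(·|s))` and
`ε_m^k` bounds `sup_t E_{s∼d_t^{π₁^k}}[D_TV(T₁^k(·|s,ã), T₂^k(·|s,ã))]` (uniformly in
the chunk action `ã`), then
`|V(π₁^k) − V(π₂^k)| ≤ (2 r_max/(1−γ)) [ (γ^k/(1−γ^k)) ε_π^k + ε_π^k + (γ^k/(1−γ^k)) ε_m^k ]`. -/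
theorem abs_value_sub_le_of_policy_and_model_error
    {S Act : Type*} [MeasurableSpace S] [MeasurableSpace Act]
    (γ rmax : ℝ) (k : ℕ) (hγ0 : 0 < γ) (hγ1 : γ < 1) (hk : 1 ≤ k)
    (μ0 : Measure S) [IsProbabilityMeasure μ0]
    (π1 π2 : S → Measure Act) (T1 T2 : S × Act → Measure S)
    (hπ1 : Measurable π1) (hπ2 : Measurable π2)
    (hT1 : Measurable T1) (hT2 : Measurable T2)
    (hπ1p : ∀ s, IsProbabilityMeasure (π1 s)) (hπ2p : ∀ s, IsProbabilityMeasure (π2 s))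
    (hT1p : ∀ p, IsProbabilityMeasure (T1 p)) (hT2p : ∀ p, IsProbabilityMeasure (T2 p))
    (rew : S × Act → ℝ) (hrew : Measurable rew)
    (hr0 : ∀ p, 0 ≤ rew p) (hr1 : ∀ p, rew p ≤ rmax * (1 - γ ^ k) / (1 - γ))
    (επ εm : ℝ)
    (hεπ : ∀ s, tvDist (π1 s) (π2 s) ≤ επ)
    (hmeas : Measurable fun s : S => ⨆ a : Act, tvDist (T1 (s, a)) (T2 (s, a)))
    (hεm : ∀ t : ℕ,
      ∫ s, (⨆ a : Act, tvDist (T1 (s, a)) (T2 (s, a)))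
          ∂(stateDist μ0 (fun _ => π1) (fun _ => T1) t) ≤ εm) :
    |value (γ ^ k) rew μ0 (fun _ => π1) (fun _ => T1) -
        value (γ ^ k) rew μ0 (fun _ => π2) (fun _ => T2)|
      ≤ 2 * rmax / (1 - γ) *
          (γ ^ k / (1 - γ ^ k) * επ + επ + γ ^ k / (1 - γ ^ k) * εm) := by
  obtain ⟨κ₁, rfl⟩ : ∃ κ : Kernel S Act, ⇑κ = π1 := ⟨⟨π1, hπ1⟩, rfl⟩
  obtain ⟨κ₂, rfl⟩ : ∃ κ : Kernel S Act, ⇑κ = π2 := ⟨⟨π2, hπ2⟩, rfl⟩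
  obtain ⟨τ₁, rfl⟩ : ∃ τ : Kernel (S × Act) S, ⇑τ = T1 := ⟨⟨T1, hT1⟩, rfl⟩
  obtain ⟨τ₂, rfl⟩ : ∃ τ : Kernel (S × Act) S, ⇑τ = T2 := ⟨⟨T2, hT2⟩, rfl⟩
  have : IsMarkovKernel κ₁ := ⟨hπ1p⟩
  have : IsMarkovKernel κ₂ := ⟨hπ2p⟩
  have : IsMarkovKernel τ₁ := ⟨hT1p⟩
  have : IsMarkovKernel τ₂ := ⟨hT2p⟩
  have hβ1 : γ ^ k < 1 := pow_lt_one₀ hγ0.le hγ1 (by omega)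
  have h := abs_value_sub_le_of_tvDist_saDistAt_le (pow_nonneg hγ0.le k) hβ1 hrew
    (fun p => ⟨hr0 p, hr1 p⟩) (tvDist_saDistAt_le μ0 hεπ hmeas hεm)
  have half : rmax * (1 - γ ^ k) / (1 - γ) / (1 - γ ^ k) * (επ + (επ + εm) * (γ ^ k / (1 - γ ^ k)))
      = 2 * rmax / (1 - γ) * (γ ^ k / (1 - γ ^ k) * επ + επ + γ ^ k / (1 - γ ^ k) * εm) / 2 := by
    field_simp [(by linarith : 1 - γ ≠ 0), (by linarith : 1 - γ ^ k ≠ 0)]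
    ring
  rw [half] at h
  exact h.trans (half_le_self (by linarith [(abs_nonneg _).trans h]))
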